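/- For any infinite Φ-structure A and immediate terms z_1, z_2, z_3, w_1, w_2, w_3 (z_1, w_1 of sort bool; z_2,z_3 and w_2,w_3 of matching sorts): A ⊨ (if z_1 then z_2 else z_3) = (if w_1 then w_2 else w_3) if and only if z_1 ≡ w_1, z_2 ≡ w_2, and z_3 ≡ w_3. -/

import Mathlib

namespace McCarthy

/-- Sorts: individual (`ind`) and Boolean (`bool`). -/
inductive Srt where
  | ind | bool
deriving DecidableEq

/-- A function variable is identified by its sort, arity and index. -/
abbrev FV : Type := Srt × ℕ × ℕ

/-- Explicit terms over a vocabulary `Φ`. -/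
inductive Term (Φ : Type) where
  | tt : Term Φ
  | ff : Term Φ
  | ivar : ℕ → Term Φ
  | fapp : FV → List (Term Φ) → Term Φ
  | prim : Φ → List (Term Φ) → Term Φ
  | cond : Srt → Term Φ → Term Φ → Term Φ → Term Φ

variable {Φ : Type}

def isIvar : Term Φ → Bool
  | .ivar _ => true
  | _ => false

/-- Immediate terms: individual variables, or function variables applied to
individual variables (nullary function variables included). -/
def isImmediate : Term Φ → Bool
  | .ivar _ => true
  | .fapp p args => (args.all isIvar) && (args.length == p.2.1)
  | _ => false

/-- Irreducible terms: immediate terms, Boolean constants, or applications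
with immediate arguments. -/
def isIrreducible : Term Φ → Bool
  | .tt => true
  | .ff => true
  | .ivar _ => true
  | .fapp p args => ((args.all isIvar) && (args.length == p.2.1)) || args.all isImmediate
  | .prim _ args => args.all isImmediate
  | .cond _ a b c => isImmediate a && isImmediate b && isImmediate c

/-- The sort of an immediate (or irreducible non-`prim`) term. -/
def immSort : Term Φ → Srt
  | .tt => .bool
  | .ff => .bool
  | .fapp p _ => p.1
  | .cond s _ _ _ => s
  | _ => .ind

mutual
/-- `sizeT E` counts the occurrences of non-immediate proper subterms of `E`. -/
def sizeT : Term Φ → ℕ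
  | .tt => 0
  | .ff => 0
  | .ivar _ => 0
  | .fapp _ args => sizeTL args
  | .prim _ args => sizeTL args
  | .cond _ a b c =>
      (sizeT a + (if isImmediate a then 0 else 1)) +
      (sizeT b + (if isImmediate b then 0 else 1)) +
      (sizeT c + (if isImmediate c then 0 else 1))

def sizeTL : List (Term Φ) → ℕ
  | [] => 0
  | t :: ts => (sizeT t + (if isImmediate t then 0 else 1)) + sizeTL ts
end

mutual
/-- Renaming of function variables. -/
def renameF (ρ : FV → FV) : Term Φ → Term Φ
  | .tt => .tt
  | .ff => .ff
  | .ivar i => .ivar i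
  | .fapp p args => .fapp (ρ p) (renameFL ρ args)
  | .prim f args => .prim f (renameFL ρ args)
  | .cond s a b c => .cond s (renameF ρ a) (renameF ρ b) (renameF ρ c)

def renameFL (ρ : FV → FV) : List (Term Φ) → List (Term Φ)
  | [] => []
  | t :: ts => renameF ρ t :: renameFL ρ ts
end

mutual
/-- Renaming of individual variables. -/
def renameV (σ : ℕ → ℕ) : Term Φ → Term Φ
  | .tt => .tt
  | .ff => .ff
  | .ivar i => .ivar (σ i)
  | .fapp p args => .fapp p (renameVL σ args)
  | .prim f args => .prim f (renameVL σ args)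
  | .cond s a b c => .cond s (renameV σ a) (renameV σ b) (renameV σ c)

def renameVL (σ : ℕ → ℕ) : List (Term Φ) → List (Term Φ)
  | [] => []
  | t :: ts => renameV σ t :: renameVL σ ts
end

mutual
/-- Does the function variable `q` occur in the term? -/
def occursF (q : FV) : Term Φ → Bool
  | .tt => false
  | .ff => false
  | .ivar _ => false
  | .fapp p args => (decide (p = q)) || occursFL q args
  | .prim _ args => occursFL q args
  | .cond _ a b c => occursF q a || occursF q b || occursF q c

def occursFL (q : FV) : List (Term Φ) → Bool
  | [] => false
  | t :: ts => occursF q t || occursFL q ts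
end


/-! ## Extended recursive programs -/

/-- A body equation `p(x⃗) = rhs`. -/
structure Eqn (Φ : Type) where
  p : FV
  xs : List ℕ
  rhs : Term Φ

/-- An extended recursive program `E₀(x⃗) where { p₁(x⃗₁) = E₁, …, p_K(x⃗_K) = E_K }`,
with the body represented as a multiset (set representation of the paper). -/
structure ExtProg (Φ : Type) where
  fvars : List ℕ
  head : Term Φ
  body : Multiset (Eqn Φ)

/-- The function variables bound by the body of a program. -/
def bodyPvars (E : ExtProg Φ) : Multiset FV := E.body.map Eqn.p

/-- `q` is fresh for `E`: it is not a recursion variable of `E` and occurs nowhere in `E`. -/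
def FreshIn (q : FV) (E : ExtProg Φ) : Prop :=
  occursF q E.head = false ∧ ∀ e ∈ E.body, e.p ≠ q ∧ occursF q e.rhs = false

/-- The argument list of an application term (the empty list otherwise). -/
def argsOf : Term Φ → List (Term Φ)
  | .fapp _ as => as
  | .prim _ as => as
  | .cond _ a b c => [a, b, c]
  | _ => []

/-- Replace the argument list of an application term. -/
def withArgs : Term Φ → List (Term Φ) → Term Φ
  | .fapp p _, as => .fapp p as
  | .prim f _, as => .prim f as
  | .cond s _ _ _, [a, b, c] => .cond s a b c
  | t, _ => t

def isApp : Term Φ → Bool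
  | .fapp _ _ => true
  | .prim _ _ => true
  | .cond _ _ _ _ => true
  | _ => false

/-- Labels `(p, j, q)` of arrow reductions. -/
abbrev Lbl : Type := FV × ℕ × FV

/-- The arrow-reduction relation `E(x⃗) →^{(p,j,q)} F(x⃗)` on extended programs:
either a non-immediate `j`-th argument of the (outermost application) right-hand side
of the body equation for `p` is split off into a new equation for the fresh variable `q`
(body case), or — when `p` is fresh, serving merely as a marker — the non-immediate
`j`-th argument of the head is split off (head case). -/
inductive Step : Lbl → ExtProg Φ → ExtProg Φ → Prop where
  | body (p : FV) (j : ℕ) (q : FV) (E F : ExtProg Φ) (s : Multiset (Eqn Φ)) (e : Eqn Φ)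
      (G : Term Φ)
      (hbody : E.body = s + {e}) (hp : e.p = p) (happ : isApp e.rhs = true)
      (hG : (argsOf e.rhs)[j]? = some G) (himm : isImmediate G = false)
      (hq : FreshIn q E) (har : q.2.1 = e.xs.length)
      (hF : F = ⟨E.fvars, E.head,
        s + {⟨p, e.xs, withArgs e.rhs ((argsOf e.rhs).set j (.fapp q (e.xs.map Term.ivar)))⟩,
             ⟨q, e.xs, G⟩}⟩) :
      Step (p, j, q) E F
  | head (p : FV) (j : ℕ) (q : FV) (E F : ExtProg Φ) (G : Term Φ)
      (hp : FreshIn p E) (hq : FreshIn q E) (hpq : p ≠ q) (happ : isApp E.head = true)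
      (hG : (argsOf E.head)[j]? = some G) (himm : isImmediate G = false)
      (har : q.2.1 = E.fvars.length)
      (hF : F = ⟨E.fvars,
        withArgs E.head ((argsOf E.head).set j (.fapp q (E.fvars.map Term.ivar))),
        E.body + {⟨q, E.fvars, G⟩}⟩) :
      Step (p, j, q) E F

/-- One-step reduction: arrow reduction for some label. -/
def Step1 (E F : ExtProg Φ) : Prop := ∃ l : Lbl, Step l E F

/-- The `~_E` relation on function variables used in the Amalgamation Lemma:
`p ~_E p'` iff both are the same recursion variable of `E` (body case) or
neither is a recursion variable of `E` (head case). -/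
def SameCase (E : ExtProg Φ) (p p' : FV) : Prop :=
  (p = p' ∧ p ∈ bodyPvars E) ∨ (p ∉ bodyPvars E ∧ p' ∉ bodyPvars E)

/-- Size of an extended program: total number of occurrences of non-immediate
proper subterms of its parts. -/
def sizeP (E : ExtProg Φ) : ℕ := sizeT E.head + (E.body.map (fun e => sizeT e.rhs)).sum

/-- An extended program is irreducible if all its parts are irreducible terms. -/
def IrrProg (E : ExtProg Φ) : Prop :=
  isIrreducible E.head = true ∧ ∀ e ∈ E.body, isIrreducible e.rhs = true

/-! ## Congruence -/

/-- `ρ` preserves sorts and arities of function variables. -/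
def SortArityPres (ρ : FV → FV) : Prop := ∀ v : FV, (ρ v).1 = v.1 ∧ (ρ v).2.1 = v.2.1

/-- One equation is obtained from another by renaming the (bound) individual
variables and applying a renaming `ρ` of the function variables. -/
def EqnCong (ρ : FV → FV) (e f : Eqn Φ) : Prop :=
  f.p = ρ e.p ∧ ∃ σ : ℕ → ℕ,
    (∀ a ∈ e.xs, ∀ b ∈ e.xs, σ a = σ b → a = b) ∧
    f.xs = e.xs.map σ ∧ f.rhs = renameV σ (renameF ρ e.rhs)

/-- Congruence of extended programs: an alphabetic change of the bound individual
and function variables together with a permutation of the body equations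
(the latter being automatic in the multiset representation). -/
def Congruent (E F : ExtProg Φ) : Prop :=
  ∃ ρ : FV → FV, Function.Bijective ρ ∧ SortArityPres ρ ∧
    (∀ p : FV, p ∉ bodyPvars E → ρ p = p) ∧
    F.fvars = E.fvars ∧ F.head = renameF ρ E.head ∧
    Multiset.Rel (EqnCong ρ) E.body F.body

/-- Full reduction: a (possibly empty) chain of one-step reductions followed by a
congruence, i.e. `E ≡_c F` or `E →₁ ⋯ →₁ F' ≡_c F`. -/
def Reduces (E F : ExtProg Φ) : Prop :=
  ∃ G : ExtProg Φ, Relation.ReflTransGen Step1 E G ∧ Congruent G F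


/-! ## Semantics -/

section Semantics

variable {A : Type}

/-- An environment for the function variables: a partial function
`Aⁿ ⇀ A ⊕ Bool` for each function variable (`none` = divergence). -/
abbrev Env (A : Type) : Type := FV → List A → Option (A ⊕ Bool)

/-- A `Φ`-structure on the universe `A`: a partial interpretation of each
primitive (`Sum.inl` for sort `ind`, `Sum.inr` for sort `bool`). -/
abbrev Struc (Φ A : Type) : Type := Φ → List A → Option (A ⊕ Bool)

/-- An environment is sort- and arity-respecting. -/
def GoodEnv (env : Env A) : Prop :=
  ∀ p : FV, ∀ as v, env p as = some v →
    as.length = p.2.1 ∧ (p.1 = Srt.ind → ∃ a, v = Sum.inl a) ∧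
    (p.1 = Srt.bool → ∃ b, v = Sum.inr b)

/-- A structure is sort- and arity-respecting. -/
def GoodStruc (St : Struc Φ A) (arΦ : Φ → ℕ) (sΦ : Φ → Srt) : Prop :=
  ∀ φ as v, St φ as = some v →
    as.length = arΦ φ ∧ (sΦ φ = Srt.ind → ∃ a, v = Sum.inl a) ∧
    (sΦ φ = Srt.bool → ∃ b, v = Sum.inr b)

/-- A structure is total (on arguments of the right arity). -/
def TotalStruc (St : Struc Φ A) (arΦ : Φ → ℕ) : Prop :=
  ∀ φ as, as.length = arΦ φ → (St φ as).isSome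

mutual
/-- Kleene evaluation of terms: `none` means divergence; arguments of
applications are evaluated strictly and must be of sort `ind`; the conditional
evaluates its test first and then the selected branch. -/
def eval (St : Struc Φ A) (iv : ℕ → A) (env : Env A) : Term Φ → Option (A ⊕ Bool)
  | .tt => some (Sum.inr true)
  | .ff => some (Sum.inr false)
  | .ivar i => some (Sum.inl (iv i))
  | .fapp p args =>
      match evalArgs St iv env args with
      | none => none
      | some as => env p as
  | .prim f args =>
      match evalArgs St iv env args with
      | none => none
      | some as => St f as
  | .cond _ a b c =>
      match eval St iv env a with
      | some (Sum.inr true) => eval St iv env b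
      | some (Sum.inr false) => eval St iv env c
      | _ => none

def evalArgs (St : Struc Φ A) (iv : ℕ → A) (env : Env A) :
    List (Term Φ) → Option (List A)
  | [] => some []
  | t :: ts =>
      match eval St iv env t with
      | some (Sum.inl a) =>
          match evalArgs St iv env ts with
          | some as => some (a :: as)
          | none => none
      | _ => none
end

/-- Validity of the identity `E = F` in the structure: Kleene strong equality
under every assignment of individuals to the individual variables and of
sort-respecting partial functions to the function variables. -/
def Valid (St : Struc Φ A) (E F : Term Φ) : Prop :=
  ∀ (iv : ℕ → A) (env : Env A), GoodEnv env → eval St iv env E = eval St iv env F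

/-- An individual variable is *placed* in the identity
`φ(zs₁) = ψ(zs₂)` if it is one of the listed immediate arguments. -/
def Placed (zs₁ zs₂ : List (Term Φ)) (s : ℕ) : Prop := Term.ivar s ∈ zs₁ ++ zs₂

/-- Injective validity `A ⊨_inj φ(zs₁) = ψ(zs₂)`: validity under all
assignments which are injective on the placed individual variables. -/
def ValidInjId (St : Struc Φ A) (φ ψ : Φ) (zs₁ zs₂ : List (Term Φ)) : Prop :=
  ∀ (iv : ℕ → A) (env : Env A), GoodEnv env →
    (∀ s t, Placed zs₁ zs₂ s → Placed zs₁ zs₂ t → iv s = iv t → s = t) →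
    eval St iv env (.prim φ zs₁) = eval St iv env (.prim ψ zs₂)

/-- Bind the variables `xs` to the values `as` on top of the assignment `iv`. -/
def bindList (xs : List ℕ) (as : List A) (iv : ℕ → A) (i : ℕ) : A :=
  match xs.findIdx? (· = i) with
  | some k => as.getD k (iv i)
  | none => iv i

/-- `env` solves the system of recursive equations in the body of `E`. -/
def Solves (St : Struc Φ A) (iv : ℕ → A) (E : ExtProg Φ) (env : Env A) : Prop :=
  ∀ e ∈ E.body, ∀ as : List A, as.length = e.xs.length →
    env e.p as = eval St (bindList e.xs as iv) env e.rhs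

/-- The pointwise partial-function (information) ordering on environments. -/
def envLE (env env' : Env A) : Prop :=
  ∀ p as, env p as = none ∨ env p as = env' p as

/-- `Den St iv E w` : the denotation of the extended program `E` at the
assignment `iv` is `w`, computed by evaluating the head at the least solution
of the body. -/
def Den (St : Struc Φ A) (iv : ℕ → A) (E : ExtProg Φ) (w : Option (A ⊕ Bool)) : Prop :=
  ∃ env : Env A, Solves St iv E env ∧ (∀ env', Solves St iv E env' → envLE env env') ∧
    eval St iv env E.head = w

/-! ## Recursors and intensions -/

/-- The renaming of individual variables matching the list `xs` with the list `ys`. -/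
def bindRen (xs ys : List ℕ) (i : ℕ) : ℕ :=
  match xs.findIdx? (· = i) with
  | some k => ys.getD k i
  | none => i

/-- The parts of two irreducible programs define the same functional, modulo the
renaming `ρ` of the recursion variables and the matching of the bound individual
variables. -/
def EqnSemEq (St : Struc Φ A) (ρ : FV → FV) (e f : Eqn Φ) : Prop :=
  e.p = ρ f.p ∧ e.xs.length = f.xs.length ∧
  ∀ (iv : ℕ → A) (env : Env A), GoodEnv env →
    eval St iv env e.rhs = eval St iv env (renameV (bindRen f.xs e.xs) (renameF ρ f.rhs))

/-- The recursors of `E` and `F` on the structure are equal (strongly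
isomorphic): the bodies match up to a sort- and arity-preserving bijection of the
recursion variables, with the corresponding parts denoting the same functionals. -/
def RecEq (St : Struc Φ A) (E F : ExtProg Φ) : Prop :=
  ∃ ρ : FV → FV, Function.Bijective ρ ∧ SortArityPres ρ ∧
    (∀ (iv : ℕ → A) (env : Env A), GoodEnv env →
      eval St iv env E.head = eval St iv env (renameF ρ F.head)) ∧
    Multiset.Rel (EqnSemEq St ρ) E.body F.body

/-- Intensional equivalence on a structure: the referential intensions (the
recursors of the canonical forms) of the two programs are equal. -/
def IntEqOn (St : Struc Φ A) (E F : ExtProg Φ) : Prop :=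
  ∃ E' F' : ExtProg Φ, Reduces E E' ∧ IrrProg E' ∧ Reduces F F' ∧ IrrProg F' ∧
    RecEq St E' F'

end Semantics

/-- Global intensional equivalence: equal referential intensions in every
infinite `Φ`-structure. -/
def GlobalIntEq (E F : ExtProg Φ) : Prop :=
  ∀ (A : Type) (St : Struc Φ A), Infinite A → IntEqOn St E F

/-- A program is proper if none of its parts is an immediate term of Boolean sort. -/
def ProperProg (E : ExtProg Φ) : Prop :=
  ¬(isImmediate E.head = true ∧ immSort E.head = Srt.bool) ∧
  ∀ e ∈ E.body, ¬(isImmediate e.rhs = true ∧ immSort e.rhs = Srt.bool)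


/-! ## Pure algebraic terms (Statement 0) -/

/-- Pure algebraic terms: built only from individual variables and function
variables of sort `ind` (of the correct arities) by application. -/
inductive PureAlg : Term Φ → Prop where
  | ivar (i : ℕ) : PureAlg (.ivar i)
  | fapp (n i : ℕ) (args : List (Term Φ)) (hargs : ∀ t ∈ args, PureAlg t)
      (hlen : args.length = n) : PureAlg (.fapp (Srt.ind, n, i) args)

/-! ## Bare identities (Statements 14, 16) -/

/-- A term is an individual variable or a nullary function variable of sort `ind`. -/
def BareVarT (t : Term Φ) : Prop :=
  (∃ i, t = Term.ivar i) ∨ (∃ i, t = Term.fapp (Srt.ind, 0, i) [])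

/-- A bare variable: `(false, i)` codes the individual variable `v_i`,
`(true, i)` codes the nullary function variable `p^{ind,0}_i`. -/
abbrev BareVar : Type := Bool × ℕ

/-- Canonical choice of bare variables: each variable occurring for the first
time is the first unused variable of its kind in the fixed alternating list
`v₀, p₀, v₁, p₁, …`. -/
def CanonicalBare (xs : List BareVar) : Prop :=
  ∀ i x, xs[i]? = some x → (∀ j < i, xs[j]? ≠ some x) →
    x.2 = (((xs.take i).filter (fun y => y.1 == x.1)).dedup).length

/-- The representative function of an equivalence relation `r` on the placed
variables: a placed variable is sent to the least element of its class. -/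
noncomputable def repFun (placed : ℕ → Prop) (r : ℕ → ℕ → Prop) (s : ℕ) : ℕ :=
  open Classical in
  if placed s then sInf {j | r s j} else s

/-! ## Propositional programs coding graphs (Statement 19) -/

/-- The propositional variable `r`. -/
def rVar : FV := (Srt.bool, 0, 0)

/-- The propositional variable `p_i`. -/
def pVar (n : ℕ) (i : Fin n) : FV := (Srt.bool, 0, 1 + (i : ℕ))

/-- The propositional variable `p_{ij}`. -/
def pijVar (n : ℕ) (i j : Fin n) : FV := (Srt.bool, 0, 1 + n + ((i : ℕ) * n + (j : ℕ)))

/-- The part `E_{ij}` of the program coding the graph `E`. -/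
def edgeTerm (n : ℕ) (E : Fin n → Fin n → Bool) (i j : Fin n) : Term Empty :=
  if E i j then
    .cond Srt.bool (.fapp (pVar n i) []) (.fapp (pVar n j) []) (.fapp rVar [])
  else
    .cond Srt.bool (.fapp (pVar n i) []) (.fapp rVar []) (.fapp (pVar n j) [])

/-- The irreducible propositional program `prog(E)` coding the graph `E`:
`true where { p_i = p_i : i < n } ∪ { p_{ij} = E_{ij} : i,j < n } ∪ { r = false }`. -/
def graphProg (n : ℕ) (E : Fin n → Fin n → Bool) : ExtProg Empty where
  fvars := []
  head := .tt
  body :=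
    (Finset.univ.val.map (fun i : Fin n => (⟨pVar n i, [], .fapp (pVar n i) []⟩ : Eqn Empty)))
    + ((Finset.univ.val (α := Fin n × Fin n)).map
        (fun ij => (⟨pijVar n ij.1 ij.2, [], edgeTerm n E ij.1 ij.2⟩ : Eqn Empty)))
    + {⟨rVar, [], .ff⟩}

/-!
Fix an injective assignment `iv` of the individual variables. Then distinct immediate terms
`p(x⃗)` read distinct entries `(p, iv x⃗)` of the environment, and an environment may give these
entries arbitrary values of the right sort, or diverge on them.

If the branches are Boolean, all six parts are such entries, each free to be `true`, `false`
or divergent, and an identity of three-valued conditionals over free atoms forces the atoms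
to coincide. If the branches are individual, an environment making only `z₁` converge
(to `true`) separates distinct tests, while making every test `true` (resp. `false`) reduces
the identity to `z₂ = w₂` (resp. `z₃ = w₃`), which forces equal terms: an individual variable
always converges to its own value and an entry converges exactly when the environment says so.
-/

section ConditionalIdentities

variable {A : Type} {St : Struc Φ A} {iv : ℕ → A}

lemma exists_eq_map_ivar_of_all_isIvar {args : List (Term Φ)} (h : args.all isIvar = true) :
    ∃ l : List ℕ, args = l.map .ivar := by
  induction args with
  | nil => exact ⟨[], rfl⟩
  | cons t ts ih =>
    simp only [List.all_cons, Bool.and_eq_true] at h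
    obtain ⟨l, rfl⟩ := ih h.2
    cases t with
    | ivar i => exact ⟨i :: l, rfl⟩
    | _ => simp [isIvar] at h

lemma exists_eq_of_isImmediate {t : Term Φ} (ht : isImmediate t = true) :
    (∃ i, t = .ivar i) ∨
      ∃ (p : FV) (l : List ℕ), t = .fapp p (l.map .ivar) ∧ l.length = p.2.1 := by
  cases t with
  | ivar i => exact .inl ⟨i, rfl⟩
  | fapp p args =>
    simp only [isImmediate, Bool.and_eq_true, beq_iff_eq] at ht
    obtain ⟨l, rfl⟩ := exists_eq_map_ivar_of_all_isIvar ht.1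
    exact .inr ⟨p, l, rfl, by simpa using ht.2⟩
  | _ => simp [isImmediate] at ht

lemma exists_fapp_of_immSort_eq_bool {t : Term Φ} (ht : isImmediate t = true)
    (hs : immSort t = .bool) :
    ∃ (p : FV) (l : List ℕ), t = .fapp p (l.map .ivar) ∧ l.length = p.2.1 ∧ p.1 = .bool := by
  rcases exists_eq_of_isImmediate ht with ⟨i, rfl⟩ | ⟨p, l, rfl, hl⟩
  · cases hs
  · exact ⟨p, l, rfl, hl, hs⟩

lemma fapp_ivars_eq_of_map_eq (hiv : Function.Injective iv) {p q : FV}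
    {l m : List ℕ} (h : ((p, l.map iv) : FV × List A) = (q, m.map iv)) :
    (Term.fapp p (l.map .ivar) : Term Φ) = .fapp q (m.map .ivar) := by
  obtain ⟨rfl, hl⟩ := Prod.mk.inj h
  rw [List.map_injective_iff.mpr hiv hl]

def kleeneIte {α : Type*} (t : Option Bool) (y z : Option α) : Option α :=
  t.bind fun b => if b then y else z

lemma kleeneIte_map {α β : Type*} (f : α → β) (t : Option Bool) (y z : Option α) :
    kleeneIte t (y.map f) (z.map f) = (kleeneIte t y z).map f := by
  cases t with
  | none => rfl
  | some b => cases b <;> rfl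

lemma eq_of_kleeneIte_eq_of_ne {T : Type*} [DecidableEq T] {a b c d e f : T}
    (H : ∀ h : T → Option Bool, kleeneIte (h a) (h b) (h c) = kleeneIte (h d) (h e) (h f))
    (had : a ≠ d) : b = d ∧ c = d := by
  constructor
  · by_contra hbd
    simpa [kleeneIte, had, hbd] using H fun x => if x = d then none else some true
  · by_contra hcd
    simpa [kleeneIte, had, hcd] using H fun x => if x = d then none else some false

lemma eq_of_kleeneIte_eq {T : Type*} [DecidableEq T] {a b c d e f : T}
    (H : ∀ h : T → Option Bool, kleeneIte (h a) (h b) (h c) = kleeneIte (h d) (h e) (h f)) :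
    a = d ∧ b = e ∧ c = f := by
  have had : a = d := by
    by_contra had
    obtain ⟨hbd, -⟩ := eq_of_kleeneIte_eq_of_ne H had
    obtain ⟨-, hfa⟩ := eq_of_kleeneIte_eq_of_ne (fun h => (H h).symm) (Ne.symm had)
    simpa [kleeneIte, hbd, hfa, Ne.symm had] using H fun x => some (decide (x = a))
  subst had
  refine ⟨rfl, ?_, ?_⟩
  · by_contra hbe
    have := H fun x => if x = a then some true else if x = b then none else some false
    by_cases hba : b = a <;> by_cases hea : e = a <;> simp_all [kleeneIte]
  · by_contra hcf
    have := H fun x => if x = a then some false else if x = c then none else some true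
    by_cases hca : c = a <;> by_cases hfa : f = a <;> simp_all [kleeneIte]

def sortedEnv (b : FV × List A → Option Bool) (i : FV × List A → Option A) : Env A :=
  fun p as =>
    if as.length = p.2.1 then
      match p.1 with
      | .ind => (i (p, as)).map Sum.inl
      | .bool => (b (p, as)).map Sum.inr
    else none

lemma goodEnv_sortedEnv (b : FV × List A → Option Bool) (i : FV × List A → Option A) :
    GoodEnv (sortedEnv b i) := by
  rintro ⟨s, n, k⟩ as v hv
  unfold sortedEnv at hv
  split_ifs at hv with hlen
  cases s <;> simp only [Option.map_eq_some_iff] at hv <;> obtain ⟨x, -, rfl⟩ := hv <;>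
    simp [hlen]

lemma eval_fapp_ivars (env : Env A) (p : FV) (l : List ℕ) :
    eval St iv env (.fapp p (l.map .ivar)) = env p (l.map iv) := by
  have hargs : evalArgs St iv env (l.map .ivar) = some (l.map iv) := by
    induction l with
    | nil => simp [evalArgs]
    | cons i l ih => simp [evalArgs, eval, ih]
  simp [eval, hargs]

lemma eval_cond_of_eq_map_inr {env : Env A} {a : Term Φ} {t : Option Bool}
    (ha : eval St iv env a = t.map Sum.inr) (s : Srt) (y z : Term Φ) :
    eval St iv env (.cond s a y z) = kleeneIte t (eval St iv env y) (eval St iv env z) := by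
  cases t with
  | none => simp [eval, ha, kleeneIte]
  | some b => cases b <;> simp [eval, ha, kleeneIte]

lemma eval_sortedEnv_of_bool (b : FV × List A → Option Bool) (i : FV × List A → Option A)
    {p : FV} {l : List ℕ} (hl : l.length = p.2.1) (hp : p.1 = .bool) :
    eval St iv (sortedEnv b i) (.fapp p (l.map .ivar)) = (b (p, l.map iv)).map Sum.inr := by
  obtain ⟨s, n, k⟩ := p
  subst hp
  simp [eval_fapp_ivars, sortedEnv, hl]

lemma eval_sortedEnv_of_ind (b : FV × List A → Option Bool) (i : FV × List A → Option A)
    {p : FV} {l : List ℕ} (hl : l.length = p.2.1) (hp : p.1 = .ind) :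
    eval St iv (sortedEnv b i) (.fapp p (l.map .ivar)) = (i (p, l.map iv)).map Sum.inl := by
  obtain ⟨s, n, k⟩ := p
  subst hp
  simp [eval_fapp_ivars, sortedEnv, hl]

lemma eval_sortedEnv_ne_none_of_ind (b : FV × List A → Option Bool) (a : A) {t : Term Φ}
    (ht : isImmediate t = true) (hs : immSort t = .ind) :
    eval St iv (sortedEnv b fun _ => some a) t ≠ none := by
  rcases exists_eq_of_isImmediate ht with ⟨j, rfl⟩ | ⟨p, l, rfl, hl⟩
  · simp [eval]
  · simp [eval_sortedEnv_of_ind b _ hl hs]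

lemma eq_of_eval_sortedEnv_eq (hiv : Function.Injective iv) (b : FV × List A → Option Bool)
    {t u : Term Φ} (ht : isImmediate t = true) (hts : immSort t = .ind)
    (hu : isImmediate u = true) (hus : immSort u = .ind)
    (h : ∀ i, eval St iv (sortedEnv b i) t = eval St iv (sortedEnv b i) u) : t = u := by
  classical
  have hnone := h fun _ => none
  rcases exists_eq_of_isImmediate ht with ⟨j, rfl⟩ | ⟨p, l, rfl, hl⟩ <;>
    rcases exists_eq_of_isImmediate hu with ⟨k, rfl⟩ | ⟨q, m, rfl, hm⟩
  · simp only [eval, Option.some.injEq, Sum.inl.injEq] at hnone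
    rw [hiv hnone]
  · rw [eval_sortedEnv_of_ind b _ hm hus] at hnone
    simp [eval] at hnone
  · rw [eval_sortedEnv_of_ind b _ hl hts] at hnone
    simp [eval] at hnone
  · by_contra hne
    have hkey : ((p, l.map iv) : FV × List A) ≠ (q, m.map iv) :=
      fun hk => hne (fapp_ivars_eq_of_map_eq hiv hk)
    have := h fun k => if k = (q, m.map iv) then some (iv 0) else none
    simp [eval_sortedEnv_of_ind b _ hl hts, eval_sortedEnv_of_ind b _ hm hus, hkey] at this

lemma eq_of_forall_eval_cond_eq_of_bool (hiv : Function.Injective iv) {s : Srt}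
    {z₁ z₂ z₃ w₁ w₂ w₃ : Term Φ}
    (hval : ∀ env : Env A, GoodEnv env →
      eval St iv env (.cond s z₁ z₂ z₃) = eval St iv env (.cond s w₁ w₂ w₃))
    (himm : ∀ t ∈ [z₁, z₂, z₃, w₁, w₂, w₃], isImmediate t = true)
    (hz₁ : immSort z₁ = .bool) (hw₁ : immSort w₁ = .bool)
    (hz₂ : immSort z₂ = .bool) (hz₃ : immSort z₃ = .bool)
    (hw₂ : immSort w₂ = .bool) (hw₃ : immSort w₃ = .bool) :
    z₁ = w₁ ∧ z₂ = w₂ ∧ z₃ = w₃ := by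
  classical
  obtain ⟨p₁, l₁, rfl, hl₁, hp₁⟩ := exists_fapp_of_immSort_eq_bool (himm z₁ (by simp)) hz₁
  obtain ⟨p₂, l₂, rfl, hl₂, hp₂⟩ := exists_fapp_of_immSort_eq_bool (himm z₂ (by simp)) hz₂
  obtain ⟨p₃, l₃, rfl, hl₃, hp₃⟩ := exists_fapp_of_immSort_eq_bool (himm z₃ (by simp)) hz₃
  obtain ⟨q₁, m₁, rfl, hm₁, hq₁⟩ := exists_fapp_of_immSort_eq_bool (himm w₁ (by simp)) hw₁
  obtain ⟨q₂, m₂, rfl, hm₂, hq₂⟩ := exists_fapp_of_immSort_eq_bool (himm w₂ (by simp)) hw₂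
  obtain ⟨q₃, m₃, rfl, hm₃, hq₃⟩ := exists_fapp_of_immSort_eq_bool (himm w₃ (by simp)) hw₃
  have H (b : FV × List A → Option Bool) :
      kleeneIte (b (p₁, l₁.map iv)) (b (p₂, l₂.map iv)) (b (p₃, l₃.map iv)) =
        kleeneIte (b (q₁, m₁.map iv)) (b (q₂, m₂.map iv)) (b (q₃, m₃.map iv)) := by
    have hb := hval (sortedEnv b fun _ => none) (goodEnv_sortedEnv _ _)
    rw [eval_cond_of_eq_map_inr (eval_sortedEnv_of_bool b _ hl₁ hp₁),
      eval_cond_of_eq_map_inr (eval_sortedEnv_of_bool b _ hm₁ hq₁),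
      eval_sortedEnv_of_bool b _ hl₂ hp₂, eval_sortedEnv_of_bool b _ hl₃ hp₃,
      eval_sortedEnv_of_bool b _ hm₂ hq₂, eval_sortedEnv_of_bool b _ hm₃ hq₃,
      kleeneIte_map, kleeneIte_map] at hb
    exact Option.map_injective Sum.inr_injective hb
  obtain ⟨h₁, h₂, h₃⟩ := eq_of_kleeneIte_eq H
  exact ⟨fapp_ivars_eq_of_map_eq hiv h₁, fapp_ivars_eq_of_map_eq hiv h₂,
    fapp_ivars_eq_of_map_eq hiv h₃⟩

lemma eq_of_forall_eval_cond_eq_of_ind (hiv : Function.Injective iv) {s : Srt}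
    {z₁ z₂ z₃ w₁ w₂ w₃ : Term Φ}
    (hval : ∀ env : Env A, GoodEnv env →
      eval St iv env (.cond s z₁ z₂ z₃) = eval St iv env (.cond s w₁ w₂ w₃))
    (himm : ∀ t ∈ [z₁, z₂, z₃, w₁, w₂, w₃], isImmediate t = true)
    (hz₁ : immSort z₁ = .bool) (hw₁ : immSort w₁ = .bool)
    (hz₂ : immSort z₂ = .ind) (hz₃ : immSort z₃ = .ind)
    (hw₂ : immSort w₂ = .ind) (hw₃ : immSort w₃ = .ind) :
    z₁ = w₁ ∧ z₂ = w₂ ∧ z₃ = w₃ := by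
  classical
  obtain ⟨p₁, l₁, rfl, hl₁, hp₁⟩ := exists_fapp_of_immSort_eq_bool (himm _ (by simp)) hz₁
  obtain ⟨q₁, m₁, rfl, hm₁, hq₁⟩ := exists_fapp_of_immSort_eq_bool (himm _ (by simp)) hw₁
  have H (b : FV × List A → Option Bool) (i : FV × List A → Option A) :
      kleeneIte (b (p₁, l₁.map iv)) (eval St iv (sortedEnv b i) z₂)
          (eval St iv (sortedEnv b i) z₃) =
        kleeneIte (b (q₁, m₁.map iv)) (eval St iv (sortedEnv b i) w₂)
          (eval St iv (sortedEnv b i) w₃) := by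
    have hbi := hval (sortedEnv b i) (goodEnv_sortedEnv _ _)
    rwa [eval_cond_of_eq_map_inr (eval_sortedEnv_of_bool b _ hl₁ hp₁),
      eval_cond_of_eq_map_inr (eval_sortedEnv_of_bool b _ hm₁ hq₁)] at hbi
  refine ⟨?_, ?_, ?_⟩
  · by_contra hne
    have hkey : ((p₁, l₁.map iv) : FV × List A) ≠ (q₁, m₁.map iv) :=
      fun hk => hne (fapp_ivars_eq_of_map_eq hiv hk)
    -- the left test is `true`, the right one diverges, and `z₂` converges
    let b : FV × List A → Option Bool := fun k => if k = (p₁, l₁.map iv) then some true else none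
    have hz₂ := eval_sortedEnv_ne_none_of_ind (St := St) (iv := iv) b (iv 0)
      (himm z₂ (by simp)) hz₂
    simpa [b, kleeneIte, Ne.symm hkey, hz₂] using H b fun _ => some (iv 0)
  · refine eq_of_eval_sortedEnv_eq (St := St) hiv (fun _ => some true) (himm z₂ (by simp)) hz₂
      (himm w₂ (by simp)) hw₂ fun i => ?_
    simpa [kleeneIte] using H (fun _ => some true) i
  · refine eq_of_eval_sortedEnv_eq (St := St) hiv (fun _ => some false) (himm z₃ (by simp)) hz₃
      (himm w₃ (by simp)) hw₃ fun i => ?_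
    simpa [kleeneIte] using H (fun _ => some false) i

end ConditionalIdentities

/-- **form 3–3.** In any infinite `Φ`-structure, an identity between
two conditionals with immediate parts (`z₁, w₁` of sort `bool`, the branches of
matching sorts) is valid iff `z₁ ≡ w₁`, `z₂ ≡ w₂` and `z₃ ≡ w₃`. -/
theorem statement8 {Φ A : Type} [Infinite A] (St : Struc Φ A) (s : Srt)
    (z₁ z₂ z₃ w₁ w₂ w₃ : Term Φ)
    (himm : ∀ t ∈ [z₁, z₂, z₃, w₁, w₂, w₃], isImmediate t = true)
    (hz₁ : immSort z₁ = Srt.bool) (hw₁ : immSort w₁ = Srt.bool)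
    (hz₂ : immSort z₂ = s) (hz₃ : immSort z₃ = s)
    (hw₂ : immSort w₂ = s) (hw₃ : immSort w₃ = s) :
    Valid St (.cond s z₁ z₂ z₃) (.cond s w₁ w₂ w₃) ↔
      (z₁ = w₁ ∧ z₂ = w₂ ∧ z₃ = w₃) := by
  refine ⟨fun hval => ?_, fun ⟨h₁, h₂, h₃⟩ _ _ _ => by rw [h₁, h₂, h₃]⟩
  let iv := Infinite.natEmbedding A
  have hiv : Function.Injective iv := iv.injective
  cases s with
  | bool => exact eq_of_forall_eval_cond_eq_of_bool hiv (hval iv) himm hz₁ hw₁ hz₂ hz₃ hw₂ hw₃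
  | ind => exact eq_of_forall_eval_cond_eq_of_ind hiv (hval iv) himm hz₁ hw₁ hz₂ hz₃ hw₂ hw₃

end McCarthy
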